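/- arXiv:2212.05899 — 2 statements merged into one kernel-verified Lean document; each statement's English description precedes it below -/
import Mathlib

section
/- Let A = K[x²,xy,y²,x³,x²y,xy²,y³,z] ⊆ K[x,y,z], char K = 0, with ∂₁ = ∂/∂z, ∂₂ = y·∂/∂x, ∂₃ = x·∂/∂y restricted to A. Then ∂₁, ∂₁+∂₂, and ∂₁+∂₃ are locally nilpotent derivations of A, each admitting z as a slice, and the intersection of their kernels equals K. Hence the modified Makar-Limanov invariant ML*(A) = K. -/
open MvPolynomial

set_option synthInstance.maxHeartbeats 1000000
set_option maxHeartbeats 2000000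

/-- The generating monomials `x², xy, y², x³, x²y, xy², y³, z` inside `K[x,y,z]`. -/
def genMonomials (K : Type*) [CommRing K] : Set (MvPolynomial (Fin 3) K) :=
  {X 0 ^ 2, X 0 * X 1, X 1 ^ 2, X 0 ^ 3, X 0 ^ 2 * X 1, X 0 * X 1 ^ 2, X 1 ^ 3, X 2}

/-- The algebra `A = K[x²,xy,y²,x³,x²y,xy²,y³,z] ⊆ K[x,y,z]`. -/
noncomputable def AA (K : Type*) [CommRing K] : Subalgebra K (MvPolynomial (Fin 3) K) :=
  Algebra.adjoin K (genMonomials K)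

/-!
Each of `∂/∂z`, `∂/∂z + y ∂/∂x`, `∂/∂z + x ∂/∂y` strictly lowers a weight on the monomials of
`K[x,y,z]` (the `z`-degree, the `(x,z)`-degree and the `(y,z)`-degree respectively; `y` resp. `x`
has weight zero), so it is locally nilpotent on `K[x,y,z]` and hence on `A`, and `z` is a slice of
all three. An element killed by all three has vanishing partial derivatives, because `x` and `y`
are not zero divisors, so in characteristic zero it is a constant.
-/

namespace MvPolynomial

variable {σ R : Type*} [CommSemiring R]

def LowersWeight (ω : σ → ℕ) (L : Module.End R (MvPolynomial σ R)) : Prop :=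
  ∀ d c, ∀ d' ∈ (L (monomial d c)).support, Finsupp.weight ω d' < Finsupp.weight ω d

theorem add_single_eq_of_mem_support_pderiv_monomial {i : σ} {d d' : σ →₀ ℕ} {c : R}
    (h : d' ∈ (pderiv i (monomial d c)).support) : d' + Finsupp.single i 1 = d := by
  classical
  rw [pderiv_monomial, mem_support_iff, coeff_monomial] at h
  split_ifs at h with hd'
  · have hdi : d i ≠ 0 := fun h0 => h (by simp [h0])
    rw [← hd', tsub_add_cancel_of_le (Finsupp.single_le_iff.mpr (Nat.one_le_iff_ne_zero.mpr hdi))]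
  · exact absurd rfl h

theorem weight_add_eq_of_mem_support_pderiv_monomial (ω : σ → ℕ) {i : σ} {d d' : σ →₀ ℕ}
    {c : R} (h : d' ∈ (pderiv i (monomial d c)).support) :
    Finsupp.weight ω d' + ω i = Finsupp.weight ω d := by
  rw [← add_single_eq_of_mem_support_pderiv_monomial h, map_add, Finsupp.weight_single, one_smul]

theorem lowersWeight_pderiv {ω : σ → ℕ} {i : σ} (hi : 0 < ω i) :
    LowersWeight ω (pderiv (R := R) i).toLinearMap := by
  intro d c d' hd'
  have := weight_add_eq_of_mem_support_pderiv_monomial ω hd'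
  omega

theorem lowersWeight_X_mul_pderiv {ω : σ → ℕ} {i j : σ} (hji : ω j < ω i) :
    LowersWeight ω (LinearMap.mulLeft R (X j) ∘ₗ (pderiv (R := R) i).toLinearMap) := by
  intro d c d' hd'
  simp only [LinearMap.comp_apply, LinearMap.mulLeft_apply, support_X_mul, Finset.mem_map,
    addLeftEmbedding_apply] at hd'
  obtain ⟨e, he, rfl⟩ := hd'
  have := weight_add_eq_of_mem_support_pderiv_monomial ω he
  rw [map_add, Finsupp.weight_single, one_smul]
  omega

theorem LowersWeight.add {ω : σ → ℕ} {L L' : Module.End R (MvPolynomial σ R)}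
    (hL : LowersWeight ω L) (hL' : LowersWeight ω L') : LowersWeight ω (L + L') := by
  classical
  intro d c d' hd'
  rcases Finset.mem_union.mp (support_add hd') with h | h
  exacts [hL d c d' h, hL' d c d' h]

theorem LowersWeight.pow_apply_eq_zero {ω : σ → ℕ} {L : Module.End R (MvPolynomial σ R)}
    (hL : LowersWeight ω L) (n : ℕ) (p : MvPolynomial σ R)
    (hp : ∀ d ∈ p.support, Finsupp.weight ω d < n) : (L ^ n) p = 0 := by
  classical
  induction n generalizing p with
  | zero => simpa [← support_eq_empty, Finset.eq_empty_iff_forall_notMem] using hp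
  | succ n ih =>
    rw [pow_succ, Module.End.mul_apply]
    refine ih _ fun d' hd' => ?_
    rw [p.as_sum, map_sum] at hd'
    obtain ⟨d, hd, hd'⟩ := Finset.mem_biUnion.mp (support_sum hd')
    exact Nat.lt_of_lt_of_le (hL d _ d' hd') (Nat.lt_succ_iff.mp (hp d hd))

theorem LowersWeight.exists_pow_apply_eq_zero_of_coe {ω : σ → ℕ}
    {L : Module.End R (MvPolynomial σ R)} (hL : LowersWeight ω L)
    {S : Subalgebra R (MvPolynomial σ R)} (D : Module.End R S)
    (hD : ∀ f, (D f : MvPolynomial σ R) = L f)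
    (g : S) : ∃ n, (D ^ n) g = 0 := by
  refine ⟨(g : MvPolynomial σ R).support.sup (Finsupp.weight ω) + 1, Subtype.ext ?_⟩
  have hcomm : L ∘ₗ S.val.toLinearMap = S.val.toLinearMap ∘ₗ D :=
    LinearMap.ext fun f => (hD f).symm
  have := LinearMap.congr_fun (Module.End.commute_pow_left_of_commute hcomm
    ((g : MvPolynomial σ R).support.sup (Finsupp.weight ω) + 1)) g
  simp only [LinearMap.comp_apply, AlgHom.toLinearMap_apply, Subalgebra.coe_val] at this
  rw [← this, ZeroMemClass.coe_zero]
  exact hL.pow_apply_eq_zero _ _ fun d hd => Nat.lt_succ_of_le (Finset.le_sup hd)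

theorem eq_C_of_forall_pderiv_eq_zero [NoZeroDivisors R] [CharZero R] {p : MvPolynomial σ R}
    (h : ∀ i, pderiv i p = 0) : p = C (coeff 0 p) := by
  classical
  ext d
  rw [coeff_C]
  split_ifs with hd
  · rw [hd]
  obtain ⟨i, hi⟩ : ∃ i, d i ≠ 0 := by simpa [Finsupp.ext_iff] using Ne.symm hd
  have hdecomp : d - Finsupp.single i 1 + Finsupp.single i 1 = d :=
    tsub_add_cancel_of_le (Finsupp.single_le_iff.mpr (Nat.one_le_iff_ne_zero.mpr hi))
  have := coeff_pderiv (i := i) p (d - Finsupp.single i 1)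
  rw [h i, coeff_zero, hdecomp] at this
  exact (mul_eq_zero.mp this.symm).resolve_right (Nat.cast_add_one_ne_zero _)

theorem exists_eq_algebraMap_of_forall_pderiv_eq_zero [NoZeroDivisors R] [CharZero R]
    {S : Subalgebra R (MvPolynomial σ R)} (f : S)
    (h : ∀ i, pderiv i (f : MvPolynomial σ R) = 0) :
    ∃ c, f = algebraMap R S c :=
  ⟨coeff 0 (f : MvPolynomial σ R), Subtype.ext (eq_C_of_forall_pderiv_eq_zero h)⟩

end MvPolynomial

/-- Let `A = K[x²,xy,y²,x³,x²y,xy²,y³,z]`, `char K = 0`, with `∂₁ = ∂/∂z`, `∂₂ = y∂/∂x`,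
`∂₃ = x∂/∂y` restricted to `A`. Then `∂₁`, `∂₁+∂₂` and `∂₁+∂₃` are locally nilpotent
derivations of `A`, each admitting `z` as a slice, and the intersection of their kernels
equals `K`; hence the modified Makar-Limanov invariant `ML*(A)` equals `K`. -/
theorem MLstar_of_A_trivial (K : Type*) [Field K] [CharZero K]
    (D₁ D₂ D₃ : Derivation K ↥(AA K) ↥(AA K))
    (h₁ : ∀ f : ↥(AA K),
      (D₁ f : MvPolynomial (Fin 3) K) = pderiv 2 (f : MvPolynomial (Fin 3) K))
    (h₂ : ∀ f : ↥(AA K),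
      (D₂ f : MvPolynomial (Fin 3) K) = X 1 * pderiv 0 (f : MvPolynomial (Fin 3) K))
    (h₃ : ∀ f : ↥(AA K),
      (D₃ f : MvPolynomial (Fin 3) K) = X 0 * pderiv 1 (f : MvPolynomial (Fin 3) K))
    (zA : ↥(AA K)) (hz : (zA : MvPolynomial (Fin 3) K) = X 2) :
    (∀ g, ∃ m : ℕ, (D₁.toLinearMap ^ m) g = 0) ∧
    (∀ g, ∃ m : ℕ, ((D₁ + D₂).toLinearMap ^ m) g = 0) ∧
    (∀ g, ∃ m : ℕ, ((D₁ + D₃).toLinearMap ^ m) g = 0) ∧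
    D₁ zA = 1 ∧ (D₁ + D₂) zA = 1 ∧ (D₁ + D₃) zA = 1 ∧
    (∀ f : ↥(AA K), D₁ f = 0 → (D₁ + D₂) f = 0 → (D₁ + D₃) f = 0 →
      ∃ c : K, f = algebraMap K ↥(AA K) c) ∧
    (∀ f : ↥(AA K),
      (∀ D : Derivation K ↥(AA K) ↥(AA K),
        (∀ g, ∃ m : ℕ, (D.toLinearMap ^ m) g = 0) → (∃ s, D s = 1) → D f = 0) →
      ∃ c : K, f = algebraMap K ↥(AA K) c) := by
  have h₁₂ (f : AA K) : (((D₁ + D₂) f : AA K) : MvPolynomial (Fin 3) K) =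
      ((pderiv 2).toLinearMap + LinearMap.mulLeft K (X 1) ∘ₗ (pderiv 0).toLinearMap :
        Module.End K (MvPolynomial (Fin 3) K)) f := by
    simp [h₁, h₂]
  have h₁₃ (f : AA K) : (((D₁ + D₃) f : AA K) : MvPolynomial (Fin 3) K) =
      ((pderiv 2).toLinearMap + LinearMap.mulLeft K (X 0) ∘ₗ (pderiv 1).toLinearMap :
        Module.End K (MvPolynomial (Fin 3) K)) f := by
    simp [h₁, h₃]
  have nil₁ := LowersWeight.exists_pow_apply_eq_zero_of_coe
    (lowersWeight_pderiv (ω := ![0, 0, 1]) (i := 2) (by simp)) D₁.toLinearMap h₁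
  have nil₁₂ := LowersWeight.exists_pow_apply_eq_zero_of_coe
    ((lowersWeight_pderiv (ω := ![1, 0, 1]) (i := 2) (by simp)).add
      (lowersWeight_X_mul_pderiv (i := 0) (j := 1) (by simp))) (D₁ + D₂).toLinearMap h₁₂
  have nil₁₃ := LowersWeight.exists_pow_apply_eq_zero_of_coe
    ((lowersWeight_pderiv (ω := ![0, 1, 1]) (i := 2) (by simp)).add
      (lowersWeight_X_mul_pderiv (i := 1) (j := 0) (by simp))) (D₁ + D₃).toLinearMap h₁₃
  have slice₁ : D₁ zA = 1 := Subtype.ext (by simp [h₁, hz])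
  have slice₁₂ : (D₁ + D₂) zA = 1 := Subtype.ext (by simp [h₁, h₂, hz])
  have slice₁₃ : (D₁ + D₃) zA = 1 := Subtype.ext (by simp [h₁, h₃, hz])
  have ker (f : AA K) (k₁ : D₁ f = 0) (k₁₂ : (D₁ + D₂) f = 0) (k₁₃ : (D₁ + D₃) f = 0) :
      ∃ c : K, f = algebraMap K (AA K) c := by
    have e₂ := h₁ f
    have e₀ := h₂ f
    have e₁ := h₃ f
    simp only [Derivation.add_apply, k₁, zero_add] at k₁₂ k₁₃
    simp only [k₁, k₁₂, k₁₃, ZeroMemClass.coe_zero, zero_eq_mul, X_ne_zero, false_or] at e₀ e₁ e₂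
    refine exists_eq_algebraMap_of_forall_pderiv_eq_zero f fun i => ?_
    fin_cases i
    exacts [e₀, e₁, e₂.symm]
  exact ⟨nil₁, nil₁₂, nil₁₃, slice₁, slice₁₂, slice₁₃, ker, fun f hf =>
    ker f (hf _ nil₁ ⟨zA, slice₁⟩) (hf _ nil₁₂ ⟨zA, slice₁₂⟩) (hf _ nil₁₃ ⟨zA, slice₁₃⟩)⟩
end

section
/- Let A = K[x²,xy,y²,x³,x²y,xy²,y³,z] ⊆ K[x,y,z], char K = 0. Then the Derksen invariant HD(A), the subalgebra of A generated by the kernels of all nonzero locally nilpotent derivations of A, equals A. More precisely, A is generated by Ker(∂/∂z) and Ker(y·∂/∂x). -/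
open MvPolynomial

set_option synthInstance.maxHeartbeats 1000000
set_option maxHeartbeats 2000000

/-! `∂/∂z` and `y ∂/∂x` restrict to derivations of `A` which are nonzero and
locally nilpotent, since each application lowers the degree in `z`, resp. in `x`. Every
generator of `A` other than `z` lies in `Ker ∂/∂z`, and `z ∈ Ker (y ∂/∂x)`, so these two
kernels already generate `A`, and a fortiori so does the union of all kernels of nonzero
locally nilpotent derivations. -/

theorem LinearMap.exists_pow_apply_eq_zero_of_comp_eq {R M N : Type*} [CommSemiring R]
    [AddCommMonoid M] [Module R M] [AddCommMonoid N] [Module R N]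
    {f : M →ₗ[R] N} (hf : Function.Injective f) {g : Module.End R M} {h : Module.End R N}
    (hfg : h ∘ₗ f = f ∘ₗ g) (hh : ∀ y, ∃ n : ℕ, (h ^ n) y = 0) (x : M) :
    ∃ n : ℕ, (g ^ n) x = 0 := by
  obtain ⟨n, hn⟩ := hh (f x)
  refine ⟨n, hf ?_⟩
  rw [map_zero, ← LinearMap.comp_apply, ← Module.End.commute_pow_left_of_commute hfg,
    LinearMap.comp_apply, hn]

namespace MvPolynomial

variable {R σ : Type*} [CommSemiring R] {i : σ} {p q : MvPolynomial σ R}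

theorem lt_degreeOf_of_mem_support_pderiv {m : σ →₀ ℕ} (hm : m ∈ (pderiv i p).support) :
    m i < degreeOf i p := by
  rw [mem_support_iff, coeff_pderiv] at hm
  have := monomial_le_degreeOf i (mem_support_iff.2 (left_ne_zero_of_mul hm))
  simp only [Finsupp.add_apply, Finsupp.single_eq_same] at this
  omega

theorem degreeOf_pderiv_lt (h : pderiv i p ≠ 0) : degreeOf i (pderiv i p) < degreeOf i p := by
  obtain ⟨m, hm⟩ := support_nonempty.2 h
  rw [degreeOf_lt_iff (Nat.zero_lt_of_lt (lt_degreeOf_of_mem_support_pderiv hm))]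
  exact fun _ ↦ lt_degreeOf_of_mem_support_pderiv

theorem degreeOf_mul_pderiv_lt (hq : degreeOf i q = 0) (h : q * pderiv i p ≠ 0) :
    degreeOf i (q * pderiv i p) < degreeOf i p :=
  calc degreeOf i (q * pderiv i p) ≤ degreeOf i q + degreeOf i (pderiv i p) :=
        degreeOf_mul_le i q (pderiv i p)
    _ = degreeOf i (pderiv i p) := by rw [hq, zero_add]
    _ < degreeOf i p := degreeOf_pderiv_lt (right_ne_zero_of_mul h)

theorem pow_mulLeft_comp_pderiv_apply_eq_zero (hq : degreeOf i q = 0) :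
    ∀ (n : ℕ) (p : MvPolynomial σ R), degreeOf i p < n →
      ((LinearMap.mulLeft R q ∘ₗ (pderiv (R := R) i).toLinearMap) ^ n) p = 0
  | 0, _, hp => absurd hp (Nat.not_lt_zero _)
  | n + 1, p, hp => by
    rw [pow_succ, Module.End.mul_apply, LinearMap.comp_apply, Derivation.coeFn_coe,
      LinearMap.mulLeft_apply]
    by_cases h : q * pderiv i p = 0
    · rw [h, map_zero]
    · exact pow_mulLeft_comp_pderiv_apply_eq_zero hq n _
        ((degreeOf_mul_pderiv_lt hq h).trans_le (Nat.lt_succ_iff.1 hp))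

theorem exists_pow_apply_eq_zero_of_coe_eq_mul_pderiv
    {S : Subalgebra R (MvPolynomial σ R)} (D : Module.End R S) (hq : degreeOf i q = 0)
    (hD : ∀ f : S, (D f : MvPolynomial σ R) = q * pderiv i (f : MvPolynomial σ R)) (f : S) :
    ∃ n : ℕ, (D ^ n) f = 0 :=
  LinearMap.exists_pow_apply_eq_zero_of_comp_eq (f := S.val.toLinearMap) Subtype.val_injective
    (LinearMap.ext fun f ↦ (hD f).symm)
    (fun p ↦ ⟨_, pow_mulLeft_comp_pderiv_apply_eq_zero hq _ p (Nat.lt_succ_self _)⟩) f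

end MvPolynomial

theorem HD_of_A_is_A_general (K : Type*) [Field K]
    (D₁ D₂ : Derivation K ↥(AA K) ↥(AA K))
    (h₁ : ∀ f : ↥(AA K),
      (D₁ f : MvPolynomial (Fin 3) K) = pderiv 2 (f : MvPolynomial (Fin 3) K))
    (h₂ : ∀ f : ↥(AA K),
      (D₂ f : MvPolynomial (Fin 3) K) = X 1 * pderiv 0 (f : MvPolynomial (Fin 3) K)) :
    Algebra.adjoin K ({f : ↥(AA K) | D₁ f = 0} ∪ {f : ↥(AA K) | D₂ f = 0}) = ⊤ ∧
    Algebra.adjoin K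
      (⋃ D ∈ {D : Derivation K ↥(AA K) ↥(AA K) |
          (∀ g, ∃ m : ℕ, (D.toLinearMap ^ m) g = 0) ∧ D ≠ 0},
        {f : ↥(AA K) | D f = 0}) = ⊤ := by
  have gen_subset_ker : ((↑) : AA K → MvPolynomial (Fin 3) K) ⁻¹' genMonomials K ⊆
      {f | D₁ f = 0} ∪ {f | D₂ f = 0} := by
    intro f hf
    simp only [Set.mem_preimage, genMonomials, Set.mem_insert_iff, Set.mem_singleton_iff] at hf
    simp only [Set.mem_union, Set.mem_ofPred_eq, ← Subtype.coe_inj, ZeroMemClass.coe_zero, h₁, h₂]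
    rcases hf with h | h | h | h | h | h | h | h <;> simp [h]
  have ker_generate : Algebra.adjoin K ({f | D₁ f = 0} ∪ {f | D₂ f = 0}) = ⊤ :=
    top_unique <| (Algebra.adjoin_adjoin_coe_preimage (R := K) (s := genMonomials K)).ge.trans
      (Algebra.adjoin_mono gen_subset_ker)
  have hz : (X 2 : MvPolynomial (Fin 3) K) ∈ AA K :=
    Algebra.subset_adjoin (by simp [genMonomials])
  have hxy : (X 0 * X 1 : MvPolynomial (Fin 3) K) ∈ AA K :=
    Algebra.subset_adjoin (by simp [genMonomials])
  have D₁_lnd : D₁ ∈ {D : Derivation K (AA K) (AA K) |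
      (∀ g, ∃ m : ℕ, (D.toLinearMap ^ m) g = 0) ∧ D ≠ 0} :=
    ⟨exists_pow_apply_eq_zero_of_coe_eq_mul_pderiv (q := 1) _ (degreeOf_one 2)
        (fun f ↦ (h₁ f).trans (one_mul _).symm),
      fun h ↦ by simpa [h] using h₁ ⟨X 2, hz⟩⟩
  have D₂_lnd : D₂ ∈ {D : Derivation K (AA K) (AA K) |
      (∀ g, ∃ m : ℕ, (D.toLinearMap ^ m) g = 0) ∧ D ≠ 0} :=
    ⟨exists_pow_apply_eq_zero_of_coe_eq_mul_pderiv _ (degreeOf_X_of_ne (by decide)) h₂,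
      fun h ↦ by simpa [h, pderiv_X_of_ne] using h₂ ⟨X 0 * X 1, hxy⟩⟩
  refine ⟨ker_generate, eq_top_iff.2 (ker_generate ▸ Algebra.adjoin_mono ?_)⟩
  exact Set.union_subset (Set.subset_biUnion_of_mem (u := fun D ↦ {f | D f = 0}) D₁_lnd)
    (Set.subset_biUnion_of_mem (u := fun D ↦ {f | D f = 0}) D₂_lnd)

/-- Let `A = K[x²,xy,y²,x³,x²y,xy²,y³,z]`, `char K = 0`. The Derksen invariant `HD(A)`,
the subalgebra of `A` generated by the kernels of all nonzero locally nilpotent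
derivations of `A`, equals `A`; more precisely, `A` is generated by `Ker(∂/∂z)` and
`Ker(y∂/∂x)`. -/
theorem HD_of_A_is_A (K : Type*) [Field K] [CharZero K]
    (D₁ D₂ : Derivation K ↥(AA K) ↥(AA K))
    (h₁ : ∀ f : ↥(AA K),
      (D₁ f : MvPolynomial (Fin 3) K) = pderiv 2 (f : MvPolynomial (Fin 3) K))
    (h₂ : ∀ f : ↥(AA K),
      (D₂ f : MvPolynomial (Fin 3) K) = X 1 * pderiv 0 (f : MvPolynomial (Fin 3) K)) :
    Algebra.adjoin K ({f : ↥(AA K) | D₁ f = 0} ∪ {f : ↥(AA K) | D₂ f = 0}) = ⊤ ∧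
    Algebra.adjoin K
      (⋃ D ∈ {D : Derivation K ↥(AA K) ↥(AA K) |
          (∀ g, ∃ m : ℕ, (D.toLinearMap ^ m) g = 0) ∧ D ≠ 0},
        {f : ↥(AA K) | D f = 0}) = ⊤ :=
  HD_of_A_is_A_general K D₁ D₂ h₁ h₂
end
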